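/- arXiv:2604.01103 — 4 statements merged into one kernel-verified Lean document; each statement's English description precedes it below -/
import Mathlib

section
/- If {A_n}_{n∈ℕ} is a graded simulation on a deterministic automaton with rewards, then for every n and every (s,s') ∈ A_n: every word w accepted from s is also accepted from s', and for every prefix w' of w, rew(s, w') ≤ n + rew(s', w'). -/
def DArun {S A : Type*} (δ : S → A → S) (s : S) (w : List A) : S :=
  w.foldl δ s

/-- Accumulated reward of running word `w` from state `s`. -/
def rewW {S A : Type*} (δ : S → A → S) (rew : S → A → ℕ) : S → List A → ℕ
  | _, [] => 0
  | s, a :: w => rew s a + rewW δ rew (δ s a) w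

/-- `F` is a graded simulation on the DAwR `(S, A, δ, α, rew)`.
The index `n + rew s' a - rew s a` equals `n - rew s a + rew s' a`
(exact under the constraint `rew s a ≤ n + rew s' a`). -/
def IsGradedSim {S A : Type*} (δ : S → A → S) (α : Set S) (rew : S → A → ℕ)
    (F : ℕ → Set (S × S)) : Prop :=
  ∀ n s s', (s, s') ∈ F n →
    (s ∈ α → s' ∈ α) ∧
    (∀ a, rew s a ≤ n + rew s' a) ∧
    (∀ a, (δ s a, δ s' a) ∈ F (n + rew s' a - rew s a))

theorem graded_simulation_sound {S A : Type*}
    (δ : S → A → S) (α : Set S) (rew : S → A → ℕ) (F : ℕ → Set (S × S))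
    (hF : IsGradedSim δ α rew F) :
    ∀ n s s', (s, s') ∈ F n → ∀ w : List A, DArun δ s w ∈ α →
      DArun δ s' w ∈ α ∧
      ∀ w' : List A, w' <+: w → rewW δ rew s w' ≤ n + rewW δ rew s' w' := by

  intro n s s' hmem w
  induction w generalizing n s s' with
  | nil =>
    intro hacc
    refine ⟨(hF n s s' hmem).1 hacc, ?_⟩
    intro w' hw'
    rw [List.prefix_nil.mp hw']
    simp [rewW]
  | cons a w ih =>
    intro hacc
    obtain ⟨h1, h2, h3⟩ := hF n s s' hmem
    have hI := ih (n + rew s' a - rew s a) (δ s a) (δ s' a) (h3 a) hacc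
    have hexact : rew s a + (n + rew s' a - rew s a) = n + rew s' a :=
      Nat.add_sub_cancel' (h2 a)
    refine ⟨hI.1, ?_⟩
    intro w' hw'
    rcases w' with _ | ⟨b, w''⟩
    · simp [rewW]
    · obtain ⟨hb, hw''⟩ : b = a ∧ w'' <+: w := by
        obtain ⟨t, ht⟩ := hw'
        simp at ht
        exact ⟨ht.1, ⟨t, ht.2⟩⟩
      subst hb
      have := hI.2 w'' hw''
      simp only [rewW]
      omega
end

section
/- The graded similarity of a DAwR (the componentwise union of all graded simulations) is lax monoidal: the diagonal is contained in its 0-component, and the relational composition of its n-component with its m-component is contained in its (n+m)-component. -/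
/-- The graded similarity: componentwise union of all graded simulations. -/
def GradedSimilarity {S A : Type*} (δ : S → A → S) (α : Set S) (rew : S → A → ℕ)
    (n : ℕ) : Set (S × S) :=
  {p | ∃ F : ℕ → Set (S × S), IsGradedSim δ α rew F ∧ p ∈ F n}

lemma gradedSimilarity_isGradedSim {S A : Type*} (δ : S → A → S) (α : Set S)
    (rew : S → A → ℕ) : IsGradedSim δ α rew (GradedSimilarity δ α rew) := by
  intro n s s' ⟨F, hF, hmem⟩
  obtain ⟨h1, h2, h3⟩ := hF n s s' hmem
  exact ⟨h1, h2, fun a => ⟨F, hF, h3 a⟩⟩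

/-- The graded similarity of a DAwR is lax monoidal: the diagonal is contained in its
`0`-component and composition of the `n`- and `m`-components is contained in the
`(n+m)`-component. -/
theorem graded_similarity_lax_monoidal {S A : Type*}
    (δ : S → A → S) (α : Set S) (rew : S → A → ℕ) :
    (∀ s : S, (s, s) ∈ GradedSimilarity δ α rew 0) ∧
    (∀ n m : ℕ, {p : S × S | ∃ z, (p.1, z) ∈ GradedSimilarity δ α rew n ∧
        (z, p.2) ∈ GradedSimilarity δ α rew m} ⊆ GradedSimilarity δ α rew (n + m)) := by
  constructor
  · intro s
    refine ⟨fun _ => {p | p.1 = p.2}, ?_, rfl⟩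
    intro n s s' h
    simp only [Set.mem_setOf_eq] at h
    subst h
    exact ⟨id, fun a => Nat.le_add_left _ _, fun a => rfl⟩
  · intro n m p hp
    refine ⟨fun k => {q | ∃ n' m' z, n' + m' = k ∧
        (q.1, z) ∈ GradedSimilarity δ α rew n' ∧
        (z, q.2) ∈ GradedSimilarity δ α rew m'}, ?_, ?_⟩
    · intro k s s' ⟨n', m', w, hk, h1, h2⟩
      obtain ⟨a1, b1, c1⟩ := gradedSimilarity_isGradedSim δ α rew n' s w h1
      obtain ⟨a2, b2, c2⟩ := gradedSimilarity_isGradedSim δ α rew m' w s' h2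
      refine ⟨fun h => a2 (a1 h), fun a => ?_, fun a => ?_⟩
      · have := b1 a; have := b2 a; omega
      · exact ⟨n' + rew w a - rew s a, m' + rew s' a - rew w a, δ w a,
          by have := b1 a; have := b2 a; omega, c1 a, c2 a⟩
    · obtain ⟨z, hz1, hz2⟩ := hp
      exact ⟨n, m, z, rfl, hz1, hz2⟩
end

section
/- Let S be a finite set and A a lax monoidal [0,1]-graded relation on S satisfying A = R(L(A)) (closed under the inf-closure). Then the Lévy-Prokhorov-style lifting preserves this closure: for all subdistribution pairs and every q ∈ [0,1], if inf{q' | (f₀,f₁) ∈ (F̂A)_{q'}} ≤ q then (f₀,f₁) ∈ (F̂A)_q, where (F̂A)_q = {(f₀,f₁) | ∀a ∈ Σ, ∀X ⊆ S, ∀i ∈ {0,1}, f_i(a)(X) ≤ f_{1−i}(a)(A_q(X)) + q}. -/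
/-- Mass assigned by `f : S → ℝ` to a set `X ⊆ S` (finite state space). -/
noncomputable def fmass {S : Type*} [Fintype S] (f : S → ℝ) (X : Set S) : ℝ :=
  ∑ x : S, X.indicator f x

/-- Image of a set under a relation. -/
def relImg {S : Type*} (R : Set (S × S)) (X : Set S) : Set S :=
  {y | ∃ x ∈ X, (x, y) ∈ R}

/-- `f` is a labelled subdistribution on the finite set `S`. -/
def IsSubdist {S A : Type*} [Fintype S] (f : A → S → ℝ) : Prop :=
  (∀ a x, 0 ≤ f a x) ∧ ∀ a, (∑ x : S, f a x) ≤ 1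

/-- The relational Lévy–Prokhorov-style lifting at grade `q`:
`(f₀, f₁)` are related iff for all labels `a`, sets `X` and both directions,
`f_i(a)(X) ≤ f_{1-i}(a)(A_q(X)) + q`. -/
def LPRelLift {S A : Type*} [Fintype S] (Arel : ℝ → Set (S × S)) (q : ℝ)
    (f₀ f₁ : A → S → ℝ) : Prop :=
  ∀ (a : A) (X : Set S),
    fmass (f₀ a) X ≤ fmass (f₁ a) (relImg (Arel q) X) + q ∧
    fmass (f₁ a) X ≤ fmass (f₀ a) (relImg (Arel q) X) + q

lemma fmass_nonneg {S : Type*} [Fintype S] {f : S → ℝ} (hf : ∀ x, 0 ≤ f x) (X : Set S) :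
    0 ≤ fmass f X :=
  Finset.sum_nonneg fun x _ => Set.indicator_nonneg (fun x _ => hf x) x

lemma fmass_mono {S : Type*} [Fintype S] {f : S → ℝ} (hf : ∀ x, 0 ≤ f x) {X Y : Set S}
    (h : X ⊆ Y) : fmass f X ≤ fmass f Y :=
  Finset.sum_le_sum fun x _ => Set.indicator_le_indicator_of_subset h hf x

lemma fmass_le_sum {S : Type*} [Fintype S] {f : S → ℝ} (hf : ∀ x, 0 ≤ f x) (X : Set S) :
    fmass f X ≤ ∑ x : S, f x :=
  Finset.sum_le_sum fun x _ => Set.indicator_le_self' (fun x _ => hf x) x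

lemma relImg_mono {S : Type*} {R R' : Set (S × S)} (h : R ⊆ R') (X : Set S) :
    relImg R X ⊆ relImg R' X := fun y ⟨x, hx, hxy⟩ => ⟨x, hx, h hxy⟩

lemma lift_one {S A : Type*} [Fintype S] (Arel : ℝ → Set (S × S))
    {f₀ f₁ : A → S → ℝ} (hf₀ : IsSubdist f₀) (hf₁ : IsSubdist f₁) :
    LPRelLift Arel 1 f₀ f₁ := by
  intro a X
  constructor
  · calc fmass (f₀ a) X ≤ ∑ x : S, f₀ a x := fmass_le_sum (hf₀.1 a) X
      _ ≤ 1 := hf₀.2 a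
      _ ≤ _ := le_add_of_nonneg_left (fmass_nonneg (hf₁.1 a) _)
  · calc fmass (f₁ a) X ≤ ∑ x : S, f₁ a x := fmass_le_sum (hf₁.1 a) X
      _ ≤ 1 := hf₁.2 a
      _ ≤ _ := le_add_of_nonneg_left (fmass_nonneg (hf₀.1 a) _)

/-- For a finite state space and a monotone graded relation `A` closed under the
inf-closure (`A = R(L(A))`), the Lévy–Prokhorov-style lifting preserves this closure:
if `inf {q' ∈ [0,1] | (f₀,f₁) ∈ (F̂A)_{q'}} ≤ q` then `(f₀,f₁) ∈ (F̂A)_q`. -/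
theorem lift_preserves_infClosure {S A : Type*} [Fintype S]
    (Arel : ℝ → Set (S × S))
    (hmono : ∀ r r', r ∈ Set.Icc (0:ℝ) 1 → r' ∈ Set.Icc (0:ℝ) 1 → r ≤ r' →
      Arel r ⊆ Arel r')
    (hclosed : ∀ (x y : S), ∀ q ∈ Set.Icc (0:ℝ) 1,
      sInf ({r | r ∈ Set.Icc (0:ℝ) 1 ∧ (x, y) ∈ Arel r} ∪ {1}) ≤ q → (x, y) ∈ Arel q)
    (f₀ f₁ : A → S → ℝ) (hf₀ : IsSubdist f₀) (hf₁ : IsSubdist f₁) :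
    ∀ q ∈ Set.Icc (0:ℝ) 1,
      sInf ({q' | q' ∈ Set.Icc (0:ℝ) 1 ∧ LPRelLift Arel q' f₀ f₁} ∪ {1}) ≤ q →
      LPRelLift Arel q f₀ f₁ := by
  intro q hq hinf
  rcases eq_or_lt_of_le hq.2 with hq1 | hq1
  · rw [hq1]; exact lift_one Arel hf₀ hf₁
  -- q < 1. Choose r₀ ∈ (q,1] with Arel r₀ of minimal cardinality there.
  have hfinS : ∀ r : ℝ, (Arel r).Finite := fun r => Set.toFinite _
  set N : Set ℕ := (fun r => (Arel r).ncard) '' (Set.Ioc q 1) with hN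
  have hNne : N.Nonempty := ⟨(Arel 1).ncard, 1, ⟨hq1, le_refl 1⟩, rfl⟩
  obtain ⟨r₀, hr₀mem, hr₀card⟩ : ∃ r₀ ∈ Set.Ioc q 1, (Arel r₀).ncard = sInf N := Nat.sInf_mem hNne
  have hr₀Icc : r₀ ∈ Set.Icc (0:ℝ) 1 := ⟨le_trans hq.1 (le_of_lt hr₀mem.1), hr₀mem.2⟩
  -- On (q, r₀], Arel is constant equal to Arel r₀
  have hconst : ∀ r ∈ Set.Ioc q r₀, Arel r = Arel r₀ := by
    intro r hr
    have hrIcc : r ∈ Set.Icc (0:ℝ) 1 := ⟨le_trans hq.1 (le_of_lt hr.1), le_trans hr.2 hr₀Icc.2⟩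
    have hsub : Arel r ⊆ Arel r₀ := hmono r r₀ hrIcc hr₀Icc hr.2
    have hcard : (Arel r₀).ncard ≤ (Arel r).ncard := by
      rw [hr₀card]
      exact Nat.sInf_le ⟨r, ⟨hr.1, hrIcc.2⟩, rfl⟩
    exact Set.eq_of_subset_of_ncard_le hsub hcard (hfinS r₀)
  -- Arel r₀ = Arel q via hclosed
  have hr₀q : Arel r₀ = Arel q := by
    apply Set.Subset.antisymm
    · rintro ⟨x, y⟩ hxy
      apply hclosed x y q hq
      have hsubset : Set.Ioc q r₀ ⊆ {r | r ∈ Set.Icc (0:ℝ) 1 ∧ (x, y) ∈ Arel r} ∪ {1} := by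
        intro r hr
        left
        exact ⟨⟨le_trans hq.1 (le_of_lt hr.1), le_trans hr.2 hr₀Icc.2⟩, (hconst r hr) ▸ hxy⟩
      have hbdd : BddBelow ({r | r ∈ Set.Icc (0:ℝ) 1 ∧ (x, y) ∈ Arel r} ∪ {1}) := by
        refine ⟨0, ?_⟩
        rintro r (⟨⟨h0, _⟩, _⟩ | rfl) <;> simp_all
      calc sInf ({r | r ∈ Set.Icc (0:ℝ) 1 ∧ (x, y) ∈ Arel r} ∪ {1})
          ≤ sInf (Set.Ioc q r₀) := csInf_le_csInf hbdd ⟨r₀, ⟨hr₀mem.1, le_refl _⟩⟩ hsubset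
        _ = q := csInf_Ioc hr₀mem.1
    · exact hmono q r₀ hq hr₀Icc (le_of_lt hr₀mem.1)
  -- Main: for every ε > 0 get a witness s < q + min ε (r₀ - q)
  have key : ∀ ε > (0:ℝ), ∀ (a : A) (X : Set S),
      fmass (f₀ a) X ≤ fmass (f₁ a) (relImg (Arel q) X) + q + ε ∧
      fmass (f₁ a) X ≤ fmass (f₀ a) (relImg (Arel q) X) + q + ε := by
    intro ε hε a X
    set δ := min ε (r₀ - q) with hδ
    have hδpos : 0 < δ := lt_min hε (by linarith [hr₀mem.1])
    set M := ({q' | q' ∈ Set.Icc (0:ℝ) 1 ∧ LPRelLift Arel q' f₀ f₁} ∪ {1} : Set ℝ) with hM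
    have hMne : M.Nonempty := ⟨1, Or.inr rfl⟩
    have hMbdd : BddBelow M := by
      refine ⟨0, ?_⟩
      rintro r (⟨⟨h0, _⟩, _⟩ | rfl) <;> simp_all
    have hlt : sInf M < q + δ := lt_of_le_of_lt hinf (by linarith)
    obtain ⟨s, hsM, hslt⟩ := (csInf_lt_iff hMbdd hMne).mp hlt
    have hs1 : s ≠ 1 ∨ True := Or.inr trivial
    have hsq : s < q + δ := hslt
    have hsr₀ : s < r₀ := by
      have : q + δ ≤ r₀ := by
        have := min_le_right ε (r₀ - q); linarith [hδ ▸ this]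
      linarith
    have hsMem : s ∈ Set.Icc (0:ℝ) 1 ∧ LPRelLift Arel s f₀ f₁ := by
      rcases hsM with h | h
      · exact h
      · exfalso
        simp only [Set.mem_singleton_iff] at h
        subst h
        exact absurd hsr₀ (not_lt.mpr hr₀Icc.2)
    obtain ⟨hsIcc, hsLift⟩ := hsMem
    have hsub : Arel s ⊆ Arel q := by
      rcases le_or_gt s q with h | h
      · exact hmono s q hsIcc hq h
      · rw [hconst s ⟨h, le_of_lt hsr₀⟩, hr₀q]
    have hsle : s ≤ q + ε := by
      have := min_le_left ε (r₀ - q); linarith [hδ ▸ this]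
    obtain ⟨h1, h2⟩ := hsLift a X
    constructor
    · calc fmass (f₀ a) X ≤ fmass (f₁ a) (relImg (Arel s) X) + s := h1
        _ ≤ fmass (f₁ a) (relImg (Arel q) X) + (q + ε) :=
            add_le_add (fmass_mono (hf₁.1 a) (relImg_mono hsub X)) hsle
        _ = _ := by ring
    · calc fmass (f₁ a) X ≤ fmass (f₀ a) (relImg (Arel s) X) + s := h2
        _ ≤ fmass (f₀ a) (relImg (Arel q) X) + (q + ε) :=
            add_le_add (fmass_mono (hf₀.1 a) (relImg_mono hsub X)) hsle
        _ = _ := by ring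
  intro a X
  constructor
  · refine le_of_forall_pos_le_add fun ε hε => ?_
    have := (key ε hε a X).1; linarith
  · refine le_of_forall_pos_le_add fun ε hε => ?_
    have := (key ε hε a X).2; linarith
end

section
/- Let δ be a labelled Markov process on a finite state space S. If d is a 1-bounded pseudometric that is a (Lévy-Prokhorov) metric bisimulation on δ, then the graded relation R(d) given by closed balls, R(d)_r = {(x,y) | d(x,y) ≤ r}, is a graded relational bisimulation on δ: for all (x,y) ∈ R(d)_r, a ∈ Σ, X ⊆ S, and i ∈ {0,1}, δ(x_i)(a)(X) ≤ δ(x_{1−i})(a)(R(d)_r(X)) + r. -/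
section AuxLemmas

variable {S : Type*} [Fintype S]

lemma aux_fmass_mono {f : S → ℝ} (hf : ∀ x, 0 ≤ f x) {X Y : Set S} (h : X ⊆ Y) :
    (∑ x : S, X.indicator f x) ≤ ∑ x : S, Y.indicator f x :=
  Finset.sum_le_sum fun x _ => Set.indicator_le_indicator_of_subset h hf x

lemma aux_fmass_nonneg {f : S → ℝ} (hf : ∀ x, 0 ≤ f x) (X : Set S) :
    0 ≤ ∑ x : S, X.indicator f x :=
  Finset.sum_nonneg fun x _ => Set.indicator_nonneg (fun a _ => hf a) x

lemma aux_fmass_le_one {f : S → ℝ} (hf : ∀ x, 0 ≤ f x) (ht : ∑ x : S, f x ≤ 1)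
    (X : Set S) : (∑ x : S, X.indicator f x) ≤ 1 :=
  le_trans (Finset.sum_le_sum fun x _ => Set.indicator_le_self' (fun a _ => hf a) x) ht

end AuxLemmas

/-- `d` is a 1-bounded pseudometric on `X`. -/
def IsPMet1 {X : Type*} (d : X → X → ℝ) : Prop :=
  (∀ x y, 0 ≤ d x y) ∧ (∀ x y, d x y ≤ 1) ∧ (∀ x, d x x = 0) ∧
  (∀ x y, d x y = d y x) ∧ (∀ x y z, d x z ≤ d x y + d y z)

/-- `A` is a lax monoidal `[0,1]`-graded relation: monotone in the grade,
the diagonal is contained in `A 0`, and composition is bounded via truncated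
addition `min 1 (r + r')`. -/
def IsIRel {X : Type*} (A : ℝ → Set (X × X)) : Prop :=
  (∀ r r', r ∈ Set.Icc (0:ℝ) 1 → r' ∈ Set.Icc (0:ℝ) 1 → r ≤ r' → A r ⊆ A r') ∧
  (∀ x : X, (x, x) ∈ A 0) ∧
  (∀ r r', r ∈ Set.Icc (0:ℝ) 1 → r' ∈ Set.Icc (0:ℝ) 1 →
    {p : X × X | ∃ z, (p.1, z) ∈ A r ∧ (z, p.2) ∈ A r'} ⊆ A (min 1 (r + r')))

/-- `L(A)(x,y) = inf {r ∈ [0,1] | (x,y) ∈ A r}`, with the infimum of the empty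
set taken to be `1`. -/
noncomputable def Lmap {X : Type*} (A : ℝ → Set (X × X)) (x y : X) : ℝ :=
  sInf ({r | r ∈ Set.Icc (0:ℝ) 1 ∧ (x, y) ∈ A r} ∪ {1})

/-- `R(d)_r` is the closed-ball relation `{(x,y) | d x y ≤ r}`. -/
def Rmap {X : Type*} (d : X → X → ℝ) (r : ℝ) : Set (X × X) :=
  {p | d p.1 p.2 ≤ r}

/-- The Lévy–Prokhorov lifting (with closed balls) of a pseudometric `d`
to a pair of labelled subdistributions. Here `relImg (Rmap d r) X = X_r`
is the closed `r`-fattening of `X`. -/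
noncomputable def LPlift {S A : Type*} [Fintype S] (d : S → S → ℝ)
    (f₀ f₁ : A → S → ℝ) : ℝ :=
  sInf ({r | r ∈ Set.Icc (0:ℝ) 1 ∧ ∀ (a : A) (X : Set S),
      fmass (f₀ a) X ≤ fmass (f₁ a) (relImg (Rmap d r) X) + r ∧
      fmass (f₁ a) X ≤ fmass (f₀ a) (relImg (Rmap d r) X) + r} ∪ {1})

/-- For a finite LMP, if `d` is a metric (Lévy–Prokhorov) bisimulation, then the
closed-ball graded relation `R(d)` is a graded relational bisimulation: whenever
`d x y ≤ r` with `r ∈ [0,1]`, the transition subdistributions are within `r` on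
all sets up to `r`-fattening, in both directions. -/
theorem metric_bisim_to_graded_bisim {S A : Type*} [Fintype S]
    (δ : S → A → S → ℝ) (hδ : ∀ s, IsSubdist (fun a => δ s a))
    (d : S → S → ℝ) (hd : IsPMet1 d)
    (hbisim : ∀ x y : S, LPlift d (fun a => δ x a) (fun a => δ y a) ≤ d x y) :
    ∀ r ∈ Set.Icc (0:ℝ) 1, ∀ x y : S, (x, y) ∈ Rmap d r →
      ∀ (a : A) (X : Set S),
        fmass (δ x a) X ≤ fmass (δ y a) (relImg (Rmap d r) X) + r ∧
        fmass (δ y a) X ≤ fmass (δ x a) (relImg (Rmap d r) X) + r := by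
  classical
  obtain ⟨hd0, hd1, hdrefl, hdsym, hdtri⟩ := hd
  intro r hr x y hxy a X
  have hxnn : ∀ z, 0 ≤ δ x a z := fun z => (hδ x).1 a z
  have hynn : ∀ z, 0 ≤ δ y a z := fun z => (hδ y).1 a z
  have hxtot : ∑ z : S, δ x a z ≤ 1 := (hδ x).2 a
  have hytot : ∑ z : S, δ y a z ≤ 1 := (hδ y).2 a
  -- one step: the conditions hold at any grade s > r
  have step : ∀ s : ℝ, r < s →
      fmass (δ x a) X ≤ fmass (δ y a) (relImg (Rmap d s) X) + s ∧
      fmass (δ y a) X ≤ fmass (δ x a) (relImg (Rmap d s) X) + s := by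
    intro s hs
    set M : Set ℝ := {r' | r' ∈ Set.Icc (0:ℝ) 1 ∧ ∀ (a : A) (X : Set S),
        fmass (δ x a) X ≤ fmass (δ y a) (relImg (Rmap d r') X) + r' ∧
        fmass (δ y a) X ≤ fmass (δ x a) (relImg (Rmap d r') X) + r'} ∪ {1} with hM
    have hinf : sInf M ≤ r := le_trans (hbisim x y) hxy
    have hlt : sInf M < s := lt_of_le_of_lt hinf hs
    have hne : M.Nonempty := ⟨1, Or.inr rfl⟩
    obtain ⟨t, htM, hts⟩ := exists_lt_of_csInf_lt hne hlt
    rcases htM with ⟨⟨ht0, _⟩, hcond⟩ | ht1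
    · obtain ⟨h1, h2⟩ := hcond a X
      have hsub : relImg (Rmap d t) X ⊆ relImg (Rmap d s) X := by
        rintro z ⟨w, hwX, hwz⟩
        exact ⟨w, hwX, le_trans hwz (le_of_lt hts)⟩
      constructor
      · calc fmass (δ x a) X ≤ fmass (δ y a) (relImg (Rmap d t) X) + t := h1
          _ ≤ fmass (δ y a) (relImg (Rmap d s) X) + s :=
              add_le_add (aux_fmass_mono hynn hsub) (le_of_lt hts)
      · calc fmass (δ y a) X ≤ fmass (δ x a) (relImg (Rmap d t) X) + t := h2
          _ ≤ fmass (δ x a) (relImg (Rmap d s) X) + s :=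
              add_le_add (aux_fmass_mono hxnn hsub) (le_of_lt hts)
    · -- t = 1 < s, use total mass bounds
      have ht1' : t = 1 := ht1
      have h1s : (1:ℝ) < s := ht1' ▸ hts
      constructor
      · have := aux_fmass_le_one hxnn hxtot X
        have := aux_fmass_nonneg hynn (relImg (Rmap d s) X)
        unfold fmass at *
        linarith
      · have := aux_fmass_le_one hynn hytot X
        have := aux_fmass_nonneg hxnn (relImg (Rmap d s) X)
        unfold fmass at *
        linarith
  -- stability: for s slightly above r, the relation Rmap d s equals Rmap d r
  obtain ⟨ε₀, hε₀pos, hstable⟩ :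
      ∃ ε₀ > (0:ℝ), ∀ s : ℝ, r ≤ s → s < r + ε₀ → Rmap d s = Rmap d r := by
    by_cases hP : (Finset.univ.filter (fun p : S × S => r < d p.1 p.2)).Nonempty
    · set P := Finset.univ.filter (fun p : S × S => r < d p.1 p.2) with hPdef
      set m := P.inf' hP (fun p => d p.1 p.2) with hm
      have hrm : r < m := by
        rw [hm, Finset.lt_inf'_iff]
        intro p hp
        exact (Finset.mem_filter.mp hp).2
      refine ⟨m - r, by linarith, fun s hrs hsm => ?_⟩
      ext p
      simp only [Rmap, Set.mem_setOf_eq]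
      constructor
      · intro hps
        by_contra hpr
        push_neg at hpr
        have hpP : p ∈ P := Finset.mem_filter.mpr ⟨Finset.mem_univ p, hpr⟩
        have : m ≤ d p.1 p.2 := Finset.inf'_le _ hpP
        have : s < d p.1 p.2 := by linarith
        linarith
      · intro hpr
        exact le_trans hpr hrs
    · refine ⟨1, one_pos, fun s hrs _ => ?_⟩
      ext p
      simp only [Rmap, Set.mem_setOf_eq]
      have hall : d p.1 p.2 ≤ r := by
        by_contra h
        push_neg at h
        exact hP ⟨p, Finset.mem_filter.mpr ⟨Finset.mem_univ p, h⟩⟩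
      constructor
      · intro _; exact hall
      · intro hpr; exact le_trans hpr hrs
  -- conclude by letting s → r⁺
  have key : ∀ ε > (0:ℝ),
      fmass (δ x a) X ≤ fmass (δ y a) (relImg (Rmap d r) X) + r + ε ∧
      fmass (δ y a) X ≤ fmass (δ x a) (relImg (Rmap d r) X) + r + ε := by
    intro ε hε
    set η := min ε ε₀ / 2 with hη
    have hηpos : 0 < η := by
      have : 0 < min ε ε₀ := lt_min hε hε₀pos
      positivity
    have hηε : η ≤ ε := by
      have : min ε ε₀ ≤ ε := min_le_left _ _
      linarith
    have hηε₀ : η < ε₀ := by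
      have h1 : min ε ε₀ ≤ ε₀ := min_le_right _ _
      linarith
    have heq : Rmap d (r + η) = Rmap d r :=
      hstable (r + η) (by linarith) (by linarith)
    obtain ⟨h1, h2⟩ := step (r + η) (by linarith)
    rw [heq] at h1 h2
    exact ⟨by linarith, by linarith⟩
  constructor
  · refine le_of_forall_pos_le_add fun ε hε => ?_
    have := (key ε hε).1
    linarith
  · refine le_of_forall_pos_le_add fun ε hε => ?_
    have := (key ε hε).2
    linarith
end
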